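/- arXiv:quant-ph/0312123 — 2 statements merged into one kernel-verified Lean document; each statement's English description precedes it below -/
import Mathlib

section
/- Let d ≥ 3 and let |φ⟩ = |1⟩_1|2⟩_2(|1⟩_3|1⟩_4 + |2⟩_3|2⟩_4) in (C^d)^{⊗4}. Then for any α, ⟨φ| T_A(α R_{1,2}⊗R_{3,4} + S_{1,2}⊗S_{3,4}) |φ⟩ = (3 − α)/2. In particular this is negative whenever α > 3. -/
open Matrix BigOperators

/-- The projection `P = |Φ⟩⟨Φ|` onto the maximally entangled state
`|Φ⟩ = (1/√d) ∑ᵢ |i⟩|i⟩` on `ℂ^d ⊗ ℂ^d`. -/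
noncomputable def Pm (d : ℕ) : Matrix (Fin d × Fin d) (Fin d × Fin d) ℂ :=
  Matrix.of fun p q =>
    ((if p.1 = p.2 then (1 : ℂ) else 0) * (if q.1 = q.2 then 1 else 0)) / d

/-- The swap operator `F = ∑ᵢⱼ |i⟩⟨j| ⊗ |j⟩⟨i|` on `ℂ^d ⊗ ℂ^d`. -/
def Fm (d : ℕ) : Matrix (Fin d × Fin d) (Fin d × Fin d) ℂ :=
  Matrix.of fun p q => if p.1 = q.2 ∧ p.2 = q.1 then (1 : ℂ) else 0

/-- The antisymmetric projection `R = (I - F)/2`. -/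
noncomputable def Rm (d : ℕ) : Matrix (Fin d × Fin d) (Fin d × Fin d) ℂ :=
  (1 / 2 : ℂ) • (1 - Fm d)

/-- The symmetric projection `S = (I + F)/2`. -/
noncomputable def Sm (d : ℕ) : Matrix (Fin d × Fin d) (Fin d × Fin d) ℂ :=
  (1 / 2 : ℂ) • (1 + Fm d)

/-- `Q = I - |Φ⟩⟨Φ|`. -/
noncomputable def Qm (d : ℕ) : Matrix (Fin d × Fin d) (Fin d × Fin d) ℂ :=
  1 - Pm d

/-- Partial transpose over the first tensor factor of `ℂ^d ⊗ ℂ^d`,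
with respect to the standard basis: entrywise,
`(T M)[(i,j),(k,l)] = M[(k,j),(i,l)]`. -/
def ptA (d : ℕ) (M : Matrix (Fin d × Fin d) (Fin d × Fin d) ℂ) :
    Matrix (Fin d × Fin d) (Fin d × Fin d) ℂ :=
  Matrix.of fun p q => M (q.1, p.2) (p.1, q.2)

/-- Tensor product `M ⊗ N` of two operators on `ℂ^d ⊗ ℂ^d`, acting on
registers `((X₁,X₂),(X₃,X₄))` with `M` on `(X₁,X₂)` and `N` on `(X₃,X₄)`. -/
def kron (d : ℕ) (M N : Matrix (Fin d × Fin d) (Fin d × Fin d) ℂ) :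
    Matrix ((Fin d × Fin d) × (Fin d × Fin d)) ((Fin d × Fin d) × (Fin d × Fin d)) ℂ :=
  Matrix.of fun p q => M p.1 q.1 * N p.2 q.2

/-- Partial transpose over Alice's registers `X₁, X₃` (the first factor of
each pair), on registers ordered `((X₁,X₂),(X₃,X₄))`. -/
def pt13 (d : ℕ)
    (M : Matrix ((Fin d × Fin d) × (Fin d × Fin d)) ((Fin d × Fin d) × (Fin d × Fin d)) ℂ) :
    Matrix ((Fin d × Fin d) × (Fin d × Fin d)) ((Fin d × Fin d) × (Fin d × Fin d)) ℂ :=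
  Matrix.of fun p q =>
    M ((q.1.1, p.1.2), (q.2.1, p.2.2)) ((p.1.1, q.1.2), (p.2.1, q.2.2))

/-! Across the pairs `(X₁X₂), (X₃X₄)` the vector `φ` is the product `|12⟩ ⊗ ψ` with
`ψ = |11⟩ + |22⟩`, and `T_A` acts factorwise on `R ⊗ R` and `S ⊗ S`, so the expectation splits
into products of expectations on `ℂ^d ⊗ ℂ^d`. There `T_A F = d |Φ⟩⟨Φ|` has entry `1` exactly
between the states `|ii⟩, |jj⟩`, so `⟨12|T_A R|12⟩ = ⟨12|T_A S|12⟩ = 1/2`, `⟨ψ|T_A R|ψ⟩ = -1` and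
`⟨ψ|T_A S|ψ⟩ = 3`; the value is `α · (1/2) · (-1) + (1/2) · 3`. -/

open scoped Kronecker

section QuadraticForm

variable {ι κ R : Type*} [Fintype ι] [Fintype κ] [CommSemiring R]

theorem star_single_dotProduct_mulVec_single [DecidableEq ι] [StarRing R] (M : Matrix ι ι R)
    (i : ι) :
    star (Pi.single i 1 : ι → R) ⬝ᵥ M *ᵥ Pi.single i 1 = M i i := by
  simp [Pi.star_single]

theorem star_single_add_single_dotProduct_mulVec [DecidableEq ι] [StarRing R] (M : Matrix ι ι R)
    (i j : ι) :
    let x : ι → R := Pi.single i 1 + Pi.single j 1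
    star x ⬝ᵥ M *ᵥ x = M i i + M i j + M j i + M j j := by
  simp [Pi.star_single, mulVec_add, add_dotProduct]
  ring

theorem kronecker_mulVec_tensor (M : Matrix ι ι R) (N : Matrix κ κ R) (x : ι → R) (y : κ → R) :
    (M ⊗ₖ N) *ᵥ (fun p => x p.1 * y p.2) = fun p => (M *ᵥ x) p.1 * (N *ᵥ y) p.2 := by
  ext ⟨i, k⟩
  simp only [mulVec, dotProduct, kroneckerMap_apply, Fintype.sum_prod_type, Finset.sum_mul_sum]
  exact Finset.sum_congr rfl fun j _ => Finset.sum_congr rfl fun l _ => by ring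

theorem tensor_dotProduct_tensor (x u : ι → R) (y v : κ → R) :
    (fun p : ι × κ => x p.1 * y p.2) ⬝ᵥ (fun p => u p.1 * v p.2) = (x ⬝ᵥ u) * (y ⬝ᵥ v) := by
  simp only [dotProduct, Fintype.sum_prod_type, Finset.sum_mul_sum]
  exact Finset.sum_congr rfl fun i _ => Finset.sum_congr rfl fun k _ => by ring

theorem star_dotProduct_kronecker_mulVec [StarRing R] (M : Matrix ι ι R) (N : Matrix κ κ R)
    (x : ι → R) (y : κ → R) :
    let z : ι × κ → R := fun p => x p.1 * y p.2
    star z ⬝ᵥ (M ⊗ₖ N) *ᵥ z = (star x ⬝ᵥ M *ᵥ x) * (star y ⬝ᵥ N *ᵥ y) := by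
  intro z
  have hz : star z = fun p => star x p.1 * star y p.2 := funext fun p => star_mul' _ _
  rw [hz, kronecker_mulVec_tensor, tensor_dotProduct_tensor]

theorem star_dotProduct_smul_add_mulVec [StarRing R] (c : R) (M N : Matrix ι ι R) (x : ι → R) :
    star x ⬝ᵥ (c • M + N) *ᵥ x = c * (star x ⬝ᵥ M *ᵥ x) + star x ⬝ᵥ N *ᵥ x := by
  rw [add_mulVec, smul_mulVec, dotProduct_add, dotProduct_smul, smul_eq_mul]

end QuadraticForm

section PartialTranspose

variable {d : ℕ}

theorem kron_eq_kronecker (M N : Matrix (Fin d × Fin d) (Fin d × Fin d) ℂ) :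
    kron d M N = M ⊗ₖ N := rfl

theorem pt13_smul_add (c : ℂ) (M N : Matrix ((Fin d × Fin d) × (Fin d × Fin d))
    ((Fin d × Fin d) × (Fin d × Fin d)) ℂ) :
    pt13 d (c • M + N) = c • pt13 d M + pt13 d N := rfl

theorem pt13_kron (M N : Matrix (Fin d × Fin d) (Fin d × Fin d) ℂ) :
    pt13 d (kron d M N) = kron d (ptA d M) (ptA d N) := rfl

theorem ptA_Fm_apply (p q : Fin d × Fin d) :
    ptA d (Fm d) p q = if p.1 = p.2 ∧ q.1 = q.2 then 1 else 0 := by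
  simp only [ptA, Fm, of_apply, and_comm, eq_comm]

theorem ptA_one_apply (p q : Fin d × Fin d) :
    ptA d 1 p q = if p = q then 1 else 0 := by
  simp only [ptA, of_apply, one_apply, Prod.ext_iff, eq_comm]

theorem ptA_Rm_apply (p q : Fin d × Fin d) :
    ptA d (Rm d) p q =
      (1 / 2 : ℂ) * ((if p = q then 1 else 0) - if p.1 = p.2 ∧ q.1 = q.2 then 1 else 0) := by
  rw [← ptA_one_apply, ← ptA_Fm_apply]
  rfl

theorem ptA_Sm_apply (p q : Fin d × Fin d) :
    ptA d (Sm d) p q =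
      (1 / 2 : ℂ) * ((if p = q then 1 else 0) + if p.1 = p.2 ∧ q.1 = q.2 then 1 else 0) := by
  rw [← ptA_one_apply, ← ptA_Fm_apply]
  rfl

end PartialTranspose

theorem ite_eq_single_tensor_single_add_single {α R : Type*} [DecidableEq α] [Semiring R]
    {a b : α} (hab : a ≠ b) :
    (fun p : (α × α) × (α × α) =>
      if p.1.1 = a ∧ p.1.2 = b ∧ p.2.1 = p.2.2 ∧ (p.2.1 = a ∨ p.2.1 = b) then (1 : R) else 0) =
      fun p => (Pi.single (a, b) 1 : α × α → R) p.1 *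
        (Pi.single (a, a) 1 + Pi.single (b, b) 1 : α × α → R) p.2 := by
  ext ⟨⟨i, j⟩, k, l⟩
  simp only [Pi.add_apply, Pi.single_apply, Prod.mk.injEq]
  split_ifs <;> grind

/-- Basis states are indexed from 0 in Lean: `|1⟩ ↦ 0`, `|2⟩ ↦ 1`. -/
theorem stmt10 (d : ℕ) (hd : 3 ≤ d) (α : ℝ) :
    let φ : ((Fin d × Fin d) × (Fin d × Fin d)) → ℂ := fun p =>
      if p.1.1 = (⟨0, by omega⟩ : Fin d) ∧ p.1.2 = (⟨1, by omega⟩ : Fin d) ∧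
          p.2.1 = p.2.2 ∧
          (p.2.1 = (⟨0, by omega⟩ : Fin d) ∨ p.2.1 = (⟨1, by omega⟩ : Fin d))
        then 1 else 0
    (star φ ⬝ᵥ (pt13 d ((α : ℂ) • kron d (Rm d) (Rm d) + kron d (Sm d) (Sm d))).mulVec φ)
        = (((3 - α) / 2 : ℝ) : ℂ) ∧
      (3 < α →
        (star φ ⬝ᵥ (pt13 d ((α : ℂ) • kron d (Rm d) (Rm d) + kron d (Sm d) (Sm d))).mulVec φ).re
          < 0) := by
  intro φ
  have hab : (⟨0, by omega⟩ : Fin d) ≠ ⟨1, by omega⟩ := by simp [Fin.ext_iff]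
  have hval : star φ ⬝ᵥ (pt13 d ((α : ℂ) • kron d (Rm d) (Rm d) +
      kron d (Sm d) (Sm d))).mulVec φ = (((3 - α) / 2 : ℝ) : ℂ) := by
    rw [show φ = _ from ite_eq_single_tensor_single_add_single hab, pt13_smul_add, pt13_kron,
      pt13_kron, kron_eq_kronecker, kron_eq_kronecker, star_dotProduct_smul_add_mulVec,
      star_dotProduct_kronecker_mulVec, star_dotProduct_kronecker_mulVec,
      star_single_dotProduct_mulVec_single, star_single_dotProduct_mulVec_single,
      star_single_add_single_dotProduct_mulVec, star_single_add_single_dotProduct_mulVec]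
    simp only [ptA_Rm_apply, ptA_Sm_apply, Prod.mk.injEq, hab, hab.symm, and_self,
      if_true, if_false]
    push_cast
    ring
  refine ⟨hval, fun hα => ?_⟩
  rw [hval, Complex.ofReal_re]
  linarith
end

section
/- One iteration of the measurement protocol maps the state α R_{1,2}⊗R_{3,4} + S_{1,2}⊗S_{3,4} (on registers 1–4) tensored with ρ(ε) (on registers 5–8) to, upon both parties obtaining the P outcome and tracing out registers 1,2,5,6, the state ((d+1)/(2d)) ( α(1 + ε/(d+1)) R_{3,4}⊗R_{7,8} + S_{3,4}⊗S_{7,8} ). -/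
open Matrix BigOperators

/-- The (unnormalized) state `ρ(ε) = ((d+1+ε)/(d-1)) R⊗R + S⊗S`. -/
noncomputable def rhoE (d : ℕ) (ε : ℝ) :
    Matrix ((Fin d × Fin d) × (Fin d × Fin d)) ((Fin d × Fin d) × (Fin d × Fin d)) ℂ :=
  ((((d : ℝ) + 1 + ε) / ((d : ℝ) - 1) : ℝ) : ℂ) • kron d (Rm d) (Rm d)
    + kron d (Sm d) (Sm d)

/-- Index type of eight `d`-dimensional registers, grouped as
`((X₁,X₂),(X₃,X₄),(X₅,X₆),(X₇,X₈))`. -/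
abbrev Idx8 (d : ℕ) :=
  (Fin d × Fin d) × (Fin d × Fin d) × (Fin d × Fin d) × (Fin d × Fin d)

/-- `σ₁₂₃₄ ⊗ τ₅₆₇₈` on eight registers, where `σ` acts on `(X₁,…,X₄)` and
`τ` on `(X₅,…,X₈)`. -/
noncomputable def bigState (d : ℕ)
    (σ τ : Matrix ((Fin d × Fin d) × (Fin d × Fin d)) ((Fin d × Fin d) × (Fin d × Fin d)) ℂ) :
    Matrix (Idx8 d) (Idx8 d) ℂ :=
  Matrix.of fun p q =>
    σ (p.1, p.2.1) (q.1, q.2.1) * τ (p.2.2.1, p.2.2.2) (q.2.2.1, q.2.2.2)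

/-- The measurement projection `P₁₅ ⊗ P₂₆ ⊗ I₃₄₇₈` on eight registers. -/
noncomputable def projPP (d : ℕ) : Matrix (Idx8 d) (Idx8 d) ℂ :=
  Matrix.of fun p q =>
    Pm d (p.1.1, p.2.2.1.1) (q.1.1, q.2.2.1.1) *
      Pm d (p.1.2, p.2.2.1.2) (q.1.2, q.2.2.1.2) *
      (if p.2.1 = q.2.1 ∧ p.2.2.2 = q.2.2.2 then 1 else 0)

/-- Partial trace over registers `X₁, X₂, X₅, X₆`, leaving the four registers
`((X₃,X₄),(X₇,X₈))`. -/
noncomputable def ptrace1256 (d : ℕ) (M : Matrix (Idx8 d) (Idx8 d) ℂ) :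
    Matrix ((Fin d × Fin d) × (Fin d × Fin d)) ((Fin d × Fin d) × (Fin d × Fin d)) ℂ :=
  Matrix.of fun a b =>
    ∑ i : Fin d × Fin d, ∑ j : Fin d × Fin d,
      M (i, a.1, j, a.2) (i, b.1, j, b.2)

/-!
Sandwiching with `P₁₅ ⊗ P₂₆` and tracing out registers 1, 2, 5, 6 is bilinear in the two input
states, and sends `(A₁₂ ⊗ B₃₄) ⊗ (C₅₆ ⊗ D₇₈)` to `tr((P₁₅ ⊗ P₂₆)(A₁₂ ⊗ C₅₆)) · B₃₄ ⊗ D₇₈`, the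
weight being `tr(A Cᵀ) / d²`. As `R` and `S` are complementary symmetric projections with
`tr R = d(d-1)/2` and `tr S = d(d+1)/2`, the cross terms vanish and the `R ⊗ R`, `S ⊗ S` terms
acquire the weights `(d-1)/(2d)` and `(d+1)/(2d)`.
-/

lemma projPP_apply (d : ℕ) (p q : Idx8 d) :
    projPP d p q =
      (if p.1 = p.2.2.1 ∧ q.1 = q.2.2.1 ∧ p.2.1 = q.2.1 ∧ p.2.2.2 = q.2.2.2
        then 1 else 0) / ((d : ℂ) * d) := by
  simp only [projPP, Pm, Matrix.of_apply, Prod.ext_iff]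
  split_ifs <;> simp_all

lemma sum_projPP_mul (d : ℕ) (i a₁ j a₂ : Fin d × Fin d) (f : Idx8 d → ℂ) :
    ∑ r, projPP d (i, a₁, j, a₂) r * f r =
      if i = j then ((d : ℂ) * d)⁻¹ * ∑ u, f (u, a₁, u, a₂) else 0 := by
  simp [projPP_apply, Fintype.sum_prod_type, ite_and, Finset.mul_sum, div_eq_mul_inv]

lemma sum_mul_projPP (d : ℕ) (i b₁ j b₂ : Fin d × Fin d) (f : Idx8 d → ℂ) :
    ∑ r, f r * projPP d r (i, b₁, j, b₂) =
      if i = j then ((d : ℂ) * d)⁻¹ * ∑ u, f (u, b₁, u, b₂) else 0 := by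
  simp [projPP_apply, Fintype.sum_prod_type, ite_and, Finset.mul_sum, div_eq_mul_inv, mul_comm]

lemma ptrace1256_sandwich_projPP_apply (d : ℕ) (X : Matrix (Idx8 d) (Idx8 d) ℂ)
    (a b : (Fin d × Fin d) × (Fin d × Fin d)) :
    ptrace1256 d (projPP d * X * projPP d) a b =
      ((d : ℂ) * d)⁻¹ * ∑ u, ∑ v, X (u, a.1, u, a.2) (v, b.1, v, b.2) := by
  obtain rfl | hd := eq_or_ne d 0
  · exact a.1.1.elim0
  simp only [ptrace1256, Matrix.of_apply, Matrix.mul_apply, sum_mul_projPP, sum_projPP_mul]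
  simp only [Finset.sum_ite_eq, Finset.mem_univ, if_true, ← Finset.mul_sum, Finset.sum_const,
    Finset.card_univ, Fintype.card_prod, Fintype.card_fin, nsmul_eq_mul]
  rw [Finset.sum_comm]
  push_cast
  field_simp

section Bilinear

variable {d : ℕ} (c : ℂ)
  (σ σ' τ τ' : Matrix ((Fin d × Fin d) × (Fin d × Fin d)) ((Fin d × Fin d) × (Fin d × Fin d)) ℂ)

lemma bigState_add_left : bigState d (σ + σ') τ = bigState d σ τ + bigState d σ' τ := by
  ext; simp [bigState, add_mul]

lemma bigState_add_right : bigState d σ (τ + τ') = bigState d σ τ + bigState d σ τ' := by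
  ext; simp [bigState, mul_add]

lemma bigState_smul_left : bigState d (c • σ) τ = c • bigState d σ τ := by
  ext; simp [bigState, mul_assoc]

lemma bigState_smul_right : bigState d σ (c • τ) = c • bigState d σ τ := by
  ext; simp [bigState, mul_left_comm]

end Bilinear

lemma ptrace1256_add (d : ℕ) (X Y : Matrix (Idx8 d) (Idx8 d) ℂ) :
    ptrace1256 d (X + Y) = ptrace1256 d X + ptrace1256 d Y := by
  ext; simp [ptrace1256, Finset.sum_add_distrib]

lemma ptrace1256_smul (d : ℕ) (c : ℂ) (X : Matrix (Idx8 d) (Idx8 d) ℂ) :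
    ptrace1256 d (c • X) = c • ptrace1256 d X := by
  ext; simp [ptrace1256, Finset.mul_sum]

lemma ptrace1256_sandwich_projPP_kron (d : ℕ)
    (A B C D : Matrix (Fin d × Fin d) (Fin d × Fin d) ℂ) :
    ptrace1256 d (projPP d * bigState d (kron d A B) (kron d C D) * projPP d) =
      (((d : ℂ) * d)⁻¹ * (A * Cᵀ).trace) • kron d B D := by
  ext a b
  rw [ptrace1256_sandwich_projPP_apply, ← sum_hadamard_eq]
  simp only [bigState, kron, Matrix.of_apply, Matrix.smul_apply, Matrix.hadamard_apply,
    smul_eq_mul]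
  rw [mul_assoc, Finset.sum_mul]
  congr 1
  simp only [Finset.sum_mul]
  refine Finset.sum_congr rfl fun u _ => Finset.sum_congr rfl fun v _ => by ring

lemma Fm_transpose (d : ℕ) : (Fm d)ᵀ = Fm d := by
  ext; simp [Fm, eq_comm, and_comm]

lemma Fm_mul_self (d : ℕ) : Fm d * Fm d = 1 := by
  ext p q
  simp [Fm, Matrix.mul_apply, Matrix.one_apply, Fintype.sum_prod_type, ite_and, Prod.ext_iff]

lemma trace_Fm (d : ℕ) : (Fm d).trace = d := by
  simp [Fm, Matrix.trace, Fintype.sum_prod_type, ite_and]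

lemma Rm_transpose (d : ℕ) : (Rm d)ᵀ = Rm d := by
  simp [Rm, Fm_transpose]

lemma Sm_transpose (d : ℕ) : (Sm d)ᵀ = Sm d := by
  simp [Sm, Fm_transpose]

lemma Rm_mul_self (d : ℕ) : Rm d * Rm d = Rm d := by
  simp only [Rm, Matrix.smul_mul, Matrix.mul_smul, sub_mul, mul_sub, Fm_mul_self, one_mul,
    mul_one]
  module

lemma Sm_mul_self (d : ℕ) : Sm d * Sm d = Sm d := by
  simp only [Sm, Matrix.smul_mul, Matrix.mul_smul, add_mul, mul_add, Fm_mul_self, one_mul,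
    mul_one]
  module

lemma Rm_mul_Sm (d : ℕ) : Rm d * Sm d = 0 := by
  simp only [Rm, Sm, Matrix.smul_mul, Matrix.mul_smul, sub_mul, mul_add, Fm_mul_self, one_mul,
    mul_one]
  module

lemma Sm_mul_Rm (d : ℕ) : Sm d * Rm d = 0 := by
  simp only [Rm, Sm, Matrix.smul_mul, Matrix.mul_smul, add_mul, mul_sub, Fm_mul_self, one_mul,
    mul_one]
  module

lemma trace_Rm (d : ℕ) : (Rm d).trace = ((d : ℂ) * d - d) / 2 := by
  simp [Rm, Matrix.trace_sub, trace_Fm]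
  ring

lemma trace_Sm (d : ℕ) : (Sm d).trace = ((d : ℂ) * d + d) / 2 := by
  simp [Sm, Matrix.trace_add, trace_Fm]
  ring

theorem stmt18_general (d : ℕ) (hd : 3 ≤ d) (ε : ℝ) (α : ℝ) :
    ptrace1256 d
        (projPP d *
          bigState d ((α : ℂ) • kron d (Rm d) (Rm d) + kron d (Sm d) (Sm d)) (rhoE d ε) *
          projPP d) =
      ((((d : ℝ) + 1) / (2 * (d : ℝ)) : ℝ) : ℂ) •
        (((α * (1 + ε / ((d : ℝ) + 1)) : ℝ) : ℂ) • kron d (Rm d) (Rm d)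
          + kron d (Sm d) (Sm d)) := by
  simp only [rhoE, bigState_add_left, bigState_add_right, bigState_smul_left,
    bigState_smul_right, Matrix.mul_add, Matrix.add_mul, Matrix.mul_smul, Matrix.smul_mul,
    ptrace1256_add, ptrace1256_smul, ptrace1256_sandwich_projPP_kron, Rm_transpose,
    Sm_transpose, Rm_mul_self, Sm_mul_self, Rm_mul_Sm, Sm_mul_Rm, trace_Rm, trace_Sm,
    Matrix.trace_zero, mul_zero, zero_smul, smul_zero, add_zero, zero_add, smul_smul, smul_add]
  have hd1 : (d : ℂ) - 1 ≠ 0 := sub_ne_zero.2 (by exact_mod_cast (by omega : d ≠ 1))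
  have hd2 : (d : ℂ) + 1 ≠ 0 := Nat.cast_add_one_ne_zero d
  congr 2 <;> push_cast <;> field_simp

/-- One iteration of the protocol: starting from
`α R₁₂⊗R₃₄ + S₁₂⊗S₃₄` on registers 1–4 tensored with `ρ(ε)` on registers 5–8,
upon both parties obtaining the `P` outcome of the `{P,Q}` measurement on
`(X₁,X₅)` and `(X₂,X₆)` and tracing out registers 1,2,5,6, the resulting
(unnormalized) state on `(X₃,X₄,X₇,X₈)` is
`((d+1)/(2d)) (α(1 + ε/(d+1)) R₃₄⊗R₇₈ + S₃₄⊗S₇₈)`. -/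
theorem stmt18 (d : ℕ) (hd : 3 ≤ d) (ε : ℝ) (hε : 0 < ε) (α : ℝ) (hα : 0 ≤ α) :
    ptrace1256 d
        (projPP d *
          bigState d ((α : ℂ) • kron d (Rm d) (Rm d) + kron d (Sm d) (Sm d)) (rhoE d ε) *
          projPP d) =
      ((((d : ℝ) + 1) / (2 * (d : ℝ)) : ℝ) : ℂ) •
        (((α * (1 + ε / ((d : ℝ) + 1)) : ℝ) : ℂ) • kron d (Rm d) (Rm d)
          + kron d (Sm d) (Sm d)) :=
  stmt18_general d hd ε α
end
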